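/- For coprime positive integers a < b, the Ulam sequence U(a,b) — defined by u₁ = a, u₂ = b, and u_{k+1} being the smallest integer greater than u_k that has a unique representation as a sum of two distinct earlier terms — is a well-defined infinite strictly increasing sequence; i.e., at every stage such a next term exists. -/
import Mathlib


/-- Membership in the Ulam sequence `U(a,b)`: `n ∈ U(a,b)` iff `n = a`, `n = b`, or
`n > b` and `n` has a unique representation as a sum of two distinct earlier terms. -/
def ulamMem (a b : ℕ) (n : ℕ) : Prop :=
  Nat.strongRecOn n (fun n ih =>
    n = a ∨ n = b ∨
      (b < n ∧ ∃! q : {m : ℕ // m < n} × {m : ℕ // m < n},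
        q.1.1 < q.2.1 ∧ ih q.1.1 q.1.2 ∧ ih q.2.1 q.2.2 ∧ q.1.1 + q.2.1 = n))

/-- The Ulam sequence `U(a,b)` as a subset of `ℕ`. -/
def ulamSet (a b : ℕ) : Set ℕ := {n | ulamMem a b n}

/-- The increasing enumeration `u_k` of `U(a,b)` (0-indexed). -/
noncomputable def ulamU (a b : ℕ) (k : ℕ) : ℕ := Nat.nth (ulamMem a b) k

/-- The gap sequence `g_k = u_{k+1} - u_k` of `U(a,b)`. -/
noncomputable def ulamGap (a b : ℕ) (k : ℕ) : ℕ := ulamU a b (k + 1) - ulamU a b k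

/-- Representation function: number of pairs `(x,y)` with `x < y`, both in `P`, `x + y = n`. -/
noncomputable def repCount (P : Set ℕ) (n : ℕ) : ℕ :=
  {q : ℕ × ℕ | q.1 ∈ P ∧ q.2 ∈ P ∧ q.1 < q.2 ∧ q.1 + q.2 = n}.ncard

/-- Unfolding lemma for `ulamMem`. -/
lemma ulamMem_iff (a b n : ℕ) : ulamMem a b n ↔
    n = a ∨ n = b ∨
      (b < n ∧ ∃! q : {m : ℕ // m < n} × {m : ℕ // m < n},
        q.1.1 < q.2.1 ∧ ulamMem a b q.1.1 ∧ ulamMem a b q.2.1 ∧ q.1.1 + q.2.1 = n) := by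
  show Nat.strongRecOn n _ ↔ _
  rw [Nat.strongRecOn.eq_1, WellFounded.fix_eq]; rfl

/-- For coprime positive integers `a < b`, the Ulam sequence `U(a,b)` is a well-defined
infinite (strictly increasing) sequence: at every stage a next term exists, i.e. the
set `U(a,b)` is infinite. -/
theorem ulam_infinite (a b : ℕ) (ha : 0 < a) (hab : a < b) (hco : Nat.Coprime a b) :
    (ulamSet a b).Infinite := by
  have hma : a ∈ ulamSet a b := (ulamMem_iff a b a).2 (Or.inl rfl)
  have hmb : b ∈ ulamSet a b := (ulamMem_iff a b b).2 (Or.inr (Or.inl rfl))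
  by_contra hfin
  rw [Set.not_infinite] at hfin
  set F : Finset ℕ := hfin.toFinset with hF
  have hmemF : ∀ m : ℕ, m ∈ F ↔ m ∈ ulamSet a b := fun m => hfin.mem_toFinset
  have haF : a ∈ F := (hmemF a).2 hma
  have hbF : b ∈ F := (hmemF b).2 hmb
  have hne : F.Nonempty := ⟨b, hbF⟩
  set y := F.max' hne with hy
  have hyF : y ∈ F := F.max'_mem hne
  have hby : b ≤ y := F.le_max' b hbF
  have hay : a < y := lt_of_lt_of_le hab hby
  have haE : a ∈ F.erase y := Finset.mem_erase.2 ⟨hay.ne, haF⟩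
  have hneE : (F.erase y).Nonempty := ⟨a, haE⟩
  set x := (F.erase y).max' hneE with hx
  have hxE : x ∈ F.erase y := (F.erase y).max'_mem hneE
  have hxF : x ∈ F := (Finset.mem_erase.1 hxE).2
  have hxy : x < y := lt_of_le_of_ne (F.le_max' x hxF) (Finset.mem_erase.1 hxE).1
  have hax : a ≤ x := (F.erase y).le_max' a haE
  have hx0 : 0 < x := lt_of_lt_of_le ha hax
  have hy0 : 0 < y := lt_trans hx0 hxy
  -- x + y is a member of the Ulam set
  have hsum : (x + y) ∈ ulamSet a b := by
    apply (ulamMem_iff a b (x + y)).2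
    refine Or.inr (Or.inr ⟨by omega, ?_⟩)
    refine ⟨(⟨x, by omega⟩, ⟨y, by omega⟩),
      ⟨hxy, (hmemF x).1 hxF, (hmemF y).1 hyF, rfl⟩, ?_⟩
    rintro ⟨⟨p, hp⟩, ⟨q, hq⟩⟩ ⟨h1, h2, h3, h4⟩
    simp only at h1 h2 h3 h4 ⊢
    have hqF : q ∈ F := (hmemF q).2 h3
    have hpF : p ∈ F := (hmemF p).2 h2
    have hqy : q ≤ y := F.le_max' q hqF
    have hpE : p ∈ F.erase y := Finset.mem_erase.2 ⟨by omega, hpF⟩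
    have hpx : p ≤ x := (F.erase y).le_max' p hpE
    have hpq : p = x ∧ q = y := by omega
    ext <;> simp [hpq.1, hpq.2]
  have : x + y ∈ F := (hmemF (x + y)).2 hsum
  have := F.le_max' (x + y) this
  omega
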